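/- Let H be a real Hilbert space, P an orthogonal projection, k, χ > 0, and suppose v, ṽ, u ∈ H satisfy (v − ṽ)/k − χ P(u − v) = 0. Then ‖v‖² − ‖ṽ‖² + ‖ṽ − v‖² + kχ‖P v‖² ≤ 3kχ‖P u‖² + 3kχ‖(I−P)v‖². -/

import Mathlib

/-!
Substituting `v - ṽ = kχ P(u - v)` into the polarization identity
`‖v‖² - ‖ṽ‖² + ‖ṽ - v‖² = 2⟪v - ṽ, v⟫` and using that `P` is an orthogonal projection
(`⟪P u, v⟫ = ⟪P u, P v⟫`, `⟪P v, v⟫ = ‖P v‖²`), the left-hand side becomes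
`kχ (2⟪P u, P v⟫ - ‖P v‖²) ≤ kχ ‖P u‖²`, which is already stronger than the claim.
-/

open RealInnerProductSpace

section

variable {H : Type*} [NormedAddCommGroup H] [InnerProductSpace ℝ H]

theorem norm_sq_sub_norm_sq_add_norm_sub_sq (v w : H) :
    ‖v‖ ^ 2 - ‖w‖ ^ 2 + ‖w - v‖ ^ 2 = 2 * ⟪v - w, v⟫ := by
  rw [norm_sub_sq_real, inner_sub_left, real_inner_self_eq_norm_sq, real_inner_comm]
  ring

namespace LinearMap

variable {P : H →ₗ[ℝ] H}

theorem IsSymmetric.inner_map_left_eq_inner_map_map (hsym : P.IsSymmetric)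
    (hidem : P ∘ₗ P = P) (x y : H) : ⟪P x, y⟫ = ⟪P x, P y⟫ := by
  rw [hsym x (P y), ← comp_apply P P y, hidem, hsym]

theorem IsSymmetric.inner_map_self_eq_norm_sq (hsym : P.IsSymmetric)
    (hidem : P ∘ₗ P = P) (x : H) : ⟪P x, x⟫ = ‖P x‖ ^ 2 := by
  rw [hsym.inner_map_left_eq_inner_map_map hidem, real_inner_self_eq_norm_sq]

end LinearMap

theorem norm_sq_sub_norm_sq_add_norm_sub_sq_le_of_sub_eq_smul_map
    {P : H →ₗ[ℝ] H} (hsym : P.IsSymmetric) (hidem : P ∘ₗ P = P)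
    {c : ℝ} (hc : 0 ≤ c) {v w u : H} (hstep : v - w = c • P (u - v)) :
    ‖v‖ ^ 2 - ‖w‖ ^ 2 + ‖w - v‖ ^ 2 + c * ‖P v‖ ^ 2 ≤ c * ‖P u‖ ^ 2 := by
  have hinner : ⟪v - w, v⟫ = c * (⟪P u, P v⟫ - ‖P v‖ ^ 2) := by
    rw [hstep, real_inner_smul_left, map_sub, inner_sub_left,
      hsym.inner_map_left_eq_inner_map_map hidem, hsym.inner_map_self_eq_norm_sq hidem]
  have hyoung : 2 * ⟪P u, P v⟫ ≤ ‖P u‖ ^ 2 + ‖P v‖ ^ 2 :=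
    (mul_le_mul_of_nonneg_left (real_inner_le_norm _ _) zero_le_two).trans
      (by nlinarith [two_mul_le_add_sq ‖P u‖ ‖P v‖])
  rw [norm_sq_sub_norm_sq_add_norm_sub_sq, hinner]
  nlinarith [mul_le_mul_of_nonneg_left hyoung hc]

end

theorem stmt14_general {H : Type*} [NormedAddCommGroup H] [InnerProductSpace ℝ H]
    (P : H →ₗ[ℝ] H) (hP2 : P ∘ₗ P = P)
    (hPsa : ∀ x y : H, inner ℝ (P x) y = (inner ℝ x (P y) : ℝ))
    (k χ : ℝ) (hk : 0 < k) (hχ : 0 < χ)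
    (v vt u : H) (h : (1 / k) • (v - vt) - χ • P (u - v) = 0) :
    ‖v‖ ^ 2 - ‖vt‖ ^ 2 + ‖vt - v‖ ^ 2 + k * χ * ‖P v‖ ^ 2
      ≤ 3 * (k * χ) * ‖P u‖ ^ 2 + 3 * (k * χ) * ‖v - P v‖ ^ 2 := by
  have hkχ : 0 ≤ k * χ := (mul_pos hk hχ).le
  have hstep : v - vt = (k * χ) • P (u - v) := by
    rw [sub_eq_zero, one_div, inv_smul_eq_iff₀ hk.ne', smul_smul] at h
    exact h
  have hbound := norm_sq_sub_norm_sq_add_norm_sub_sq_le_of_sub_eq_smul_map hPsa hP2 hkχ hstep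
  nlinarith [mul_nonneg hkχ (sq_nonneg ‖P u‖), mul_nonneg hkχ (sq_nonneg ‖v - P v‖)]

theorem stmt14 {H : Type*} [NormedAddCommGroup H] [InnerProductSpace ℝ H] [CompleteSpace H]
    (P : H →ₗ[ℝ] H) (hP2 : P ∘ₗ P = P)
    (hPsa : ∀ x y : H, inner ℝ (P x) y = (inner ℝ x (P y) : ℝ))
    (k χ : ℝ) (hk : 0 < k) (hχ : 0 < χ)
    (v vt u : H) (h : (1 / k) • (v - vt) - χ • P (u - v) = 0) :
    ‖v‖ ^ 2 - ‖vt‖ ^ 2 + ‖vt - v‖ ^ 2 + k * χ * ‖P v‖ ^ 2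
      ≤ 3 * (k * χ) * ‖P u‖ ^ 2 + 3 * (k * χ) * ‖v - P v‖ ^ 2 :=
  stmt14_general P hP2 hPsa k χ hk hχ v vt u h
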